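/- arXiv:1209.2687 — 5 statements merged into one kernel-verified Lean document; each statement's English description precedes it below -/
import Mathlib

section
/- Let m1, m2 ≥ 1 and suppose c1 : Z_{m1} → C1 and c2 : Z_{m2} → C2 are colorings such that every monochromatic k-AP in Z_{m1} under c1 is trivial (constant), and likewise for c2. Define c : Z_{m1 m2} → C1 × C2 by writing each z ∈ {0,...,m1 m2 - 1} as z = x·m2 + y with 0 ≤ x < m1, 0 ≤ y < m2, and setting c(z) = (c1(x), c2(y)). Then every monochromatic k-AP in Z_{m1 m2} under c is trivial. -/
lemma aux_div_mod (m1 m2 v w : ℕ) (hm2 : 0 < m2)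
    (h : v % (m1 * m2) = w % (m1 * m2)) : (v / m2) % m1 = (w / m2) % m1 := by
  have hv : v / m2 % m1 = (v % (m1 * m2)) / m2 % m1 := by
    conv_lhs => rw [← Nat.div_add_mod v (m1 * m2)]
    rw [show m1 * m2 * (v / (m1 * m2)) = m2 * (m1 * (v / (m1 * m2))) by ring,
      Nat.mul_add_div hm2, Nat.add_comm, Nat.add_mul_mod_self_left]
  have hw : w / m2 % m1 = (w % (m1 * m2)) / m2 % m1 := by
    conv_lhs => rw [← Nat.div_add_mod w (m1 * m2)]
    rw [show m1 * m2 * (w / (m1 * m2)) = m2 * (m1 * (w / (m1 * m2))) by ring,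
      Nat.mul_add_div hm2, Nat.add_comm, Nat.add_mul_mod_self_left]
  rw [hv, hw, h]

/-- Product construction: if c1 on Z_{m1} and c2 on Z_{m2} admit only trivial
monochromatic k-APs, then so does the coloring of Z_{m1 m2} given by
z ↦ (c1 (z.val / m2), c2 (z.val % m2)). -/
theorem stmt_8 (k m1 m2 : ℕ) (hk : 3 ≤ k) (hm1 : 1 ≤ m1) (hm2 : 1 ≤ m2)
    {C1 C2 : Type*} (c1 : ZMod m1 → C1) (c2 : ZMod m2 → C2)
    (h1 : ∀ a d : ZMod m1, (∀ i < k, c1 (a + (i : ℕ) * d) = c1 a) → d = 0)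
    (h2 : ∀ a d : ZMod m2, (∀ i < k, c2 (a + (i : ℕ) * d) = c2 a) → d = 0) :
    ∀ a d : ZMod (m1 * m2),
      (∀ i < k,
        (fun z : ZMod (m1 * m2) =>
          (c1 ((z.val / m2 : ℕ) : ZMod m1), c2 ((z.val % m2 : ℕ) : ZMod m2)))
          (a + (i : ℕ) * d)
        = (fun z : ZMod (m1 * m2) =>
          (c1 ((z.val / m2 : ℕ) : ZMod m1), c2 ((z.val % m2 : ℕ) : ZMod m2))) a) →
      d = 0 := by
  intro a d hmono
  have hm1' : 0 < m1 := hm1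
  have hm2' : 0 < m2 := hm2
  haveI : NeZero m1 := ⟨hm1'.ne'⟩
  haveI : NeZero m2 := ⟨hm2'.ne'⟩
  haveI : NeZero (m1 * m2) := ⟨(Nat.mul_pos hm1' hm2').ne'⟩
  simp only at hmono
  -- φ : project to ZMod m2
  set φ : ZMod (m1 * m2) →+* ZMod m2 := ZMod.castHom (dvd_mul_left m2 m1) (ZMod m2) with hφ
  have key2 : ∀ z : ZMod (m1 * m2), ((z.val % m2 : ℕ) : ZMod m2) = φ z := by
    intro z
    rw [ZMod.natCast_mod, ZMod.natCast_val, ZMod.castHom_apply]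
  have hd2 : φ d = 0 := by
    apply h2 (φ a)
    intro i hi
    rw [← key2, ← key2]
    have := congrArg Prod.snd (hmono i hi)
    simpa [key2, map_add, map_mul, map_natCast] using this
  have hdvd : m2 ∣ d.val := by
    have : ((d.val : ℕ) : ZMod m2) = 0 := by
      rw [ZMod.natCast_val, ← ZMod.castHom_apply (h := dvd_mul_left m2 m1)]
      exact hd2
    exact (ZMod.natCast_eq_zero_iff _ _).mp this
  set e : ℕ := d.val / m2 with he
  have hde : d.val = m2 * e := (Nat.div_mul_cancel hdvd).symm.trans (Nat.mul_comm _ _)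
  -- key1 : first coordinate is an AP with difference e
  have key1 : ∀ i : ℕ, (((a + (i:ℕ) * d).val / m2 : ℕ) : ZMod m1)
      = ((a.val / m2 : ℕ) : ZMod m1) + (i : ℕ) * (e : ZMod m1) := by
    intro i
    have hcong : (a + (i:ℕ) * d).val % (m1 * m2) = (a.val + i * (m2 * e)) % (m1 * m2) := by
      have hd' : ((m2 : ZMod (m1 * m2)) * (e : ZMod (m1 * m2))) = d := by
        rw [← Nat.cast_mul, ← hde, ZMod.natCast_val, ZMod.cast_id]
      have : (((a + (i:ℕ) * d).val : ℕ) : ZMod (m1 * m2))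
          = ((a.val + i * (m2 * e) : ℕ) : ZMod (m1 * m2)) := by
        push_cast
        simp [hd', ZMod.natCast_val, ZMod.cast_id]
      rwa [ZMod.natCast_eq_natCast_iff] at this
    have hdiv := aux_div_mod m1 m2 _ _ hm2' hcong
    have hq : (a.val + i * (m2 * e)) / m2 = a.val / m2 + i * e := by
      rw [show i * (m2 * e) = m2 * (i * e) by ring]
      exact Nat.add_mul_div_left _ _ hm2'
    calc (((a + (i:ℕ) * d).val / m2 : ℕ) : ZMod m1)
        = (((a + (i:ℕ) * d).val / m2 % m1 : ℕ) : ZMod m1) := by rw [ZMod.natCast_mod]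
      _ = (((a.val + i * (m2 * e)) / m2 % m1 : ℕ) : ZMod m1) := by rw [hdiv]
      _ = (((a.val / m2 + i * e) : ℕ) : ZMod m1) := by rw [ZMod.natCast_mod, hq]
      _ = _ := by push_cast; ring
  have he0 : (e : ZMod m1) = 0 := by
    apply h1 ((a.val / m2 : ℕ) : ZMod m1)
    intro i hi
    rw [← key1 i]
    exact congrArg Prod.fst (hmono i hi)
  have hm1e : m1 ∣ e := (ZMod.natCast_eq_zero_iff _ _).mp he0
  have helt : e < m1 := by
    have h := ZMod.val_lt d
    exact Nat.div_lt_of_lt_mul (by rw [Nat.mul_comm m2 m1]; exact h)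
  have he' : e = 0 := Nat.eq_zero_of_dvd_of_lt hm1e helt
  have hv0 : d.val = 0 := by rw [hde, he', Nat.mul_zero]
  exact (ZMod.val_eq_zero d).mp hv0
end

section
/- Suppose there is an r-coloring c of Z_m with no nontrivial monochromatic k-AP. Define a coloring of [n] by giving i ∈ [n] the color c(i mod m). Then the number of monochromatic k-APs in [n] under this coloring is at most n^2/(2m(k-1)) + C·n for some constant C depending only on m and k. -/
/-- If c is an r-coloring of Z_m with no nontrivial monochromatic k-AP, then coloring
i ∈ [n] by c(i mod m) gives at most n^2/(2m(k-1)) + C·n monochromatic k-APs, where C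
depends only on m and k. -/
theorem stmt_11 (k r m : ℕ) (hk : 3 ≤ k) (hr : 2 ≤ r) (hm : 1 ≤ m)
    (c : ZMod m → Fin r)
    (hc : ∀ a d : ZMod m, d ≠ 0 → ¬ (∀ i < k, c (a + (i : ℕ) * d) = c a)) :
    ∃ C : ℝ, ∀ n : ℕ,
      ((((Finset.Icc 1 n) ×ˢ (Finset.Icc 1 n)).filter
          (fun p : ℕ × ℕ => p.1 + (k - 1) * p.2 ≤ n ∧
            ∀ i < k, c ((p.1 + i * p.2 : ℕ) : ZMod m) = c ((p.1 : ℕ) : ZMod m))).card : ℝ)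
        ≤ (n : ℝ) ^ 2 / (2 * m * (k - 1)) + C * n := by
  haveI : NeZero m := ⟨by omega⟩
  refine ⟨1, fun n => ?_⟩
  set M := (k - 1) * m with hMdef
  have hMpos : 0 < M := Nat.mul_pos (by omega) (by omega)
  set S := ((Finset.Icc 1 n ×ˢ Finset.Icc 1 n).filter
      (fun p : ℕ × ℕ => p.1 + (k - 1) * p.2 ≤ n ∧
        ∀ i < k, c ((p.1 + i * p.2 : ℕ) : ZMod m) = c ((p.1 : ℕ) : ZMod m))) with hS
  set S' := ((Finset.Icc 1 n ×ˢ Finset.Icc 1 n).filter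
      (fun p : ℕ × ℕ => m ∣ p.2 ∧ p.1 + (k - 1) * p.2 ≤ n)) with hS'
  have hSS' : S ⊆ S' := by
    intro p hp
    simp only [hS, hS', Finset.mem_filter] at hp ⊢
    obtain ⟨hmem, hle, hmono⟩ := hp
    refine ⟨hmem, ?_, hle⟩
    by_contra hdvd
    have hd0 : ((p.2 : ℕ) : ZMod m) ≠ 0 := by
      rwa [Ne, ZMod.natCast_eq_zero_iff]
    refine hc (p.1 : ZMod m) (p.2 : ZMod m) hd0 (fun i hi => ?_)
    have := hmono i hi
    push_cast at this
    exact this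
  set U := ((Finset.range n ×ˢ Finset.range n).filter (fun p : ℕ × ℕ => p.1 < p.2)) with hU
  -- helper facts for members of S'
  have hfacts : ∀ p : ℕ × ℕ, p ∈ S' → 1 ≤ p.1 ∧ p.1 + (k-1) * p.2 ≤ n ∧
      M ∣ (k-1) * p.2 ∧ M ≤ (k-1) * p.2 := by
    intro p hp
    simp only [hS', Finset.mem_filter, Finset.mem_product, Finset.mem_Icc] at hp
    obtain ⟨⟨⟨h1, _⟩, ⟨h2, _⟩⟩, hdvd, hle⟩ := hp
    obtain ⟨j, hj⟩ := hdvd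
    have hjpos : 1 ≤ j := by
      rcases Nat.eq_zero_or_pos j with h | h
      · subst h; rw [Nat.mul_zero] at hj; omega
      · exact h
    refine ⟨h1, hle, ⟨j, by rw [hj]; ring⟩, ?_⟩
    calc M = M * 1 := by ring
    _ ≤ M * j := Nat.mul_le_mul_left _ hjpos
    _ = (k-1) * p.2 := by rw [hj, hMdef]; ring
  have hkey : M * S'.card ≤ U.card := by
    rw [← Finset.card_range M, ← Finset.card_product]
    apply Finset.card_le_card_of_injOn
      (fun q : ℕ × (ℕ × ℕ) => (q.2.1 + q.1 - 1, q.2.1 + (k-1) * q.2.2 - 1))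
    · intro q hq
      simp only [Finset.mem_coe, Finset.mem_product, Finset.mem_range] at hq
      obtain ⟨ht, hq2⟩ := hq
      obtain ⟨h1, hle, _, hMle⟩ := hfacts _ hq2
      simp only [hU, Finset.mem_coe, Finset.mem_filter, Finset.mem_product, Finset.mem_range]
      omega
    · intro q hq q' hq' heq
      simp only [Finset.mem_coe, Finset.mem_product, Finset.mem_range] at hq hq'
      obtain ⟨ht, hq2⟩ := hq
      obtain ⟨ht', hq2'⟩ := hq'
      obtain ⟨h1, hle, ⟨j, hj⟩, hMle⟩ := hfacts _ hq2
      obtain ⟨h1', hle', ⟨j', hj'⟩, hMle'⟩ := hfacts _ hq2'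
      have e1 : q.2.1 + q.1 - 1 = q'.2.1 + q'.1 - 1 := congrArg Prod.fst heq
      have e2 : q.2.1 + (k-1) * q.2.2 - 1 = q'.2.1 + (k-1) * q'.2.2 - 1 := congrArg Prod.snd heq
      have hx : q.2.1 + q.1 = q'.2.1 + q'.1 := by omega
      have hy : q.2.1 + (k-1) * q.2.2 = q'.2.1 + (k-1) * q'.2.2 := by omega
      rw [hj] at hy hMle
      rw [hj'] at hy hMle'
      have hsum : M * j + q'.1 = M * j' + q.1 := by omega
      have htt : q.1 = q'.1 := by
        have h1 : (M * j + q'.1) % M = q'.1 := by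
          rw [Nat.mul_add_mod]; exact Nat.mod_eq_of_lt ht'
        have h2 : (M * j' + q.1) % M = q.1 := by
          rw [Nat.mul_add_mod]; exact Nat.mod_eq_of_lt ht
        rw [← h2, ← hsum, h1]
      have ha : q.2.1 = q'.2.1 := by omega
      have hdd : q.2.2 = q'.2.2 := by
        have hj2 : M * j = M * j' := by omega
        have hkpos : 0 < k - 1 := by omega
        have : (k-1) * q.2.2 = (k-1) * q'.2.2 := by rw [hj, hj', hj2]
        exact Nat.eq_of_mul_eq_mul_left hkpos this
      exact Prod.ext htt (Prod.ext ha hdd)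
  have hU2 : 2 * U.card ≤ n * n := by
    have hswapinj : Function.Injective (Prod.swap : ℕ × ℕ → ℕ × ℕ) := Prod.swap_injective
    have hswap : (U.image Prod.swap).card = U.card :=
      Finset.card_image_of_injective _ hswapinj
    have hdisj : Disjoint U (U.image Prod.swap) := by
      rw [Finset.disjoint_left]
      intro p hp hp'
      simp only [hU, Finset.mem_filter, Finset.mem_image, Finset.mem_product,
        Finset.mem_range] at hp hp'
      obtain ⟨q, ⟨_, hq⟩, hqp⟩ := hp'
      have : p.2 < p.1 := by
        subst hqp; simpa using hq
      omega
    have hsub : U ∪ U.image Prod.swap ⊆ Finset.range n ×ˢ Finset.range n := by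
      intro p hp
      rcases Finset.mem_union.mp hp with h | h
      · exact Finset.filter_subset _ _ h
      · simp only [Finset.mem_image] at h
        obtain ⟨q, hq, hqp⟩ := h
        have hq' := Finset.filter_subset _ _ hq
        simp only [Finset.mem_product, Finset.mem_range] at hq' ⊢
        rw [← hqp]
        simp [hq'.1, hq'.2]
    calc 2 * U.card = U.card + (U.image Prod.swap).card := by omega
    _ = (U ∪ U.image Prod.swap).card := (Finset.card_union_of_disjoint hdisj).symm
    _ ≤ (Finset.range n ×ˢ Finset.range n).card := Finset.card_le_card hsub
    _ = n * n := by rw [Finset.card_product, Finset.card_range]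
  have hcard : 2 * M * S.card ≤ n * n := by
    calc 2 * M * S.card ≤ 2 * (M * S'.card) := by
          have := Finset.card_le_card hSS'
          nlinarith
    _ ≤ 2 * U.card := by omega
    _ ≤ n * n := hU2
  -- now the real arithmetic
  have hMr : (M : ℝ) = (m : ℝ) * ((k : ℝ) - 1) := by
    rw [hMdef]
    push_cast [Nat.cast_sub (by omega : 1 ≤ k)]
    ring
  have hMr0 : (0 : ℝ) < 2 * (m : ℝ) * ((k : ℝ) - 1) := by
    have h1 : (1 : ℝ) ≤ (m : ℝ) := by exact_mod_cast hm
    have h2 : (3 : ℝ) ≤ (k : ℝ) := by exact_mod_cast hk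
    nlinarith
  have hSle : (S.card : ℝ) ≤ (n : ℝ) ^ 2 / (2 * (m : ℝ) * ((k : ℝ) - 1)) := by
    rw [le_div_iff₀ hMr0]
    have hcast : ((2 * M * S.card : ℕ) : ℝ) ≤ (n : ℝ) * n := by exact_mod_cast hcard
    push_cast at hcast
    rw [hMr] at hcast
    nlinarith
  have hnn : (0 : ℝ) ≤ (n : ℝ) := Nat.cast_nonneg n
  linarith
end

section
/- Let c be a coloring of Z_m with no nontrivial monochromatic k-AP, and color [n] by i ↦ c(i mod m). Then every monochromatic k-AP in [n] has common difference divisible by m, and consequently the number of monochromatic k-APs in [n] is at most (1/m)·(n^2/(2(k-1))) + O(n). -/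
/-- If c colors Z_m with no nontrivial monochromatic k-AP and [n] is colored by
i ↦ c(i mod m), then every monochromatic k-AP in [n] has common difference divisible
by m, and the number of monochromatic k-APs is at most (1/m)·n^2/(2(k-1)) + O(n). -/
theorem stmt_12 (k m : ℕ) (hk : 3 ≤ k) (hm : 2 ≤ m)
    {α : Type*} [DecidableEq α] (c : ZMod m → α)
    (hc : ∀ a d : ZMod m, d ≠ 0 → ¬ (∀ i < k, c (a + (i : ℕ) * d) = c a)) :
    (∀ n a d : ℕ, 1 ≤ a → 1 ≤ d → a + (k - 1) * d ≤ n →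
      (∀ i < k, c ((a + i * d : ℕ) : ZMod m) = c ((a : ℕ) : ZMod m)) → m ∣ d)
    ∧ ∃ C : ℝ, ∀ n : ℕ,
      ((((Finset.Icc 1 n) ×ˢ (Finset.Icc 1 n)).filter
          (fun p : ℕ × ℕ => p.1 + (k - 1) * p.2 ≤ n ∧
            ∀ i < k, c ((p.1 + i * p.2 : ℕ) : ZMod m) = c ((p.1 : ℕ) : ZMod m))).card : ℝ)
        ≤ (1 / (m : ℝ)) * ((n : ℝ) ^ 2 / (2 * (k - 1))) + C * n := by
  haveI : NeZero m := ⟨by omega⟩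
  have part1 : ∀ n a d : ℕ, 1 ≤ a → 1 ≤ d → a + (k - 1) * d ≤ n →
      (∀ i < k, c ((a + i * d : ℕ) : ZMod m) = c ((a : ℕ) : ZMod m)) → m ∣ d := by
    intro n a d _ _ _ hmono
    rw [← ZMod.natCast_eq_zero_iff]
    by_contra h0
    refine hc (a : ZMod m) (d : ZMod m) h0 ?_
    intro i hi
    have h := hmono i hi
    push_cast at h
    exact h
  refine ⟨part1, 0, fun n => ?_⟩
  set C' : ℕ := (k - 1) * m with hC'
  have hC'pos : 0 < C' := Nat.mul_pos (by omega) (by omega)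
  set S := (((Finset.Icc 1 n) ×ˢ (Finset.Icc 1 n)).filter
          (fun p : ℕ × ℕ => p.1 + (k - 1) * p.2 ≤ n ∧
            ∀ i < k, c ((p.1 + i * p.2 : ℕ) : ZMod m) = c ((p.1 : ℕ) : ZMod m))) with hS
  set U := (((Finset.Icc 1 n) ×ˢ (Finset.Icc 1 n)).filter
          (fun p : ℕ × ℕ => p.1 + C' * p.2 ≤ n)) with hU
  set T := (((Finset.Icc 1 n) ×ˢ (Finset.Icc 1 n)).filter
          (fun p : ℕ × ℕ => p.1 + p.2 ≤ n)) with hT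
  -- Step 1 : S.card ≤ U.card
  have h1 : S.card ≤ U.card := by
    apply Finset.card_le_card_of_injOn (fun p => (p.1, p.2 / m))
    · intro p hp
      replace hp : p ∈ S := hp
      show (p.1, p.2 / m) ∈ U
      simp only [hS, hU, Finset.mem_filter, Finset.mem_product, Finset.mem_Icc] at hp ⊢
      obtain ⟨⟨⟨ha1, ha2⟩, hd1, hd2⟩, hle, hmono⟩ := hp
      have hdvd : m ∣ p.2 := part1 n p.1 p.2 ha1 hd1 hle hmono
      obtain ⟨j, hj⟩ := hdvd
      have hjpos : 1 ≤ j := by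
        rcases Nat.eq_zero_or_pos j with h | h
        · subst h; rw [Nat.mul_zero] at hj; omega
        · exact h
      have hjn : j ≤ n := le_trans (Nat.le_mul_of_pos_left j (by omega)) (hj ▸ hd2)
      have hdiv : p.2 / m = j := by rw [hj, Nat.mul_div_cancel_left _ (by omega)]
      rw [hdiv]
      refine ⟨⟨⟨ha1, ha2⟩, hjpos, hjn⟩, ?_⟩
      have e : C' * j = (k - 1) * p.2 := by rw [hC', hj]; ring
      rw [e]; exact hle
    · intro p hp q hq h
      simp only [hS, Finset.mem_coe, Finset.mem_filter, Finset.mem_product,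
        Finset.mem_Icc] at hp hq
      obtain ⟨⟨⟨ha1, ha2⟩, hd1, hd2⟩, hle, hmono⟩ := hp
      obtain ⟨⟨⟨ha1', ha2'⟩, hd1', hd2'⟩, hle', hmono'⟩ := hq
      have hdvd : m ∣ p.2 := part1 n p.1 p.2 ha1 hd1 hle hmono
      have hdvd' : m ∣ q.2 := part1 n q.1 q.2 ha1' hd1' hle' hmono'
      have h' : (p.1, p.2 / m) = (q.1, q.2 / m) := h
      rw [Prod.mk.injEq] at h'
      obtain ⟨e1, e2⟩ := h'
      have e3 : p.2 = q.2 := by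
        rw [← Nat.div_mul_cancel hdvd, ← Nat.div_mul_cancel hdvd', e2]
      exact Prod.ext e1 e3
  -- Step 2 : U.card * C' ≤ T.card
  have h2 : U.card * C' ≤ T.card := by
    rw [← Finset.card_range C', ← Finset.card_product]
    apply Finset.card_le_card_of_injOn (fun q => (q.1.1 + q.2, C' * q.1.2 - q.2))
    · rintro ⟨⟨a, j⟩, r⟩ hq
      replace hq : ((a, j), r) ∈ U ×ˢ Finset.range C' := hq
      show (a + r, C' * j - r) ∈ T
      simp only [hU, hT, Finset.mem_product, Finset.mem_filter, Finset.mem_range,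
        Finset.mem_Icc] at hq ⊢
      obtain ⟨⟨⟨⟨ha1, ha2⟩, hj1, hj2⟩, hle⟩, hr⟩ := hq
      have ht : C' ≤ C' * j := Nat.le_mul_of_pos_right C' (by omega)
      set t := C' * j
      omega
    · rintro ⟨⟨a, j⟩, r⟩ hq ⟨⟨a', j'⟩, r'⟩ hq' h
      simp only [hU, Finset.mem_coe, Finset.mem_product, Finset.mem_filter, Finset.mem_range,
        Finset.mem_Icc] at hq hq'
      obtain ⟨⟨⟨⟨ha1, ha2⟩, hj1, hj2⟩, hle⟩, hr⟩ := hq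
      obtain ⟨⟨⟨⟨ha1', ha2'⟩, hj1', hj2'⟩, hle'⟩, hr'⟩ := hq'
      have ht : C' ≤ C' * j := Nat.le_mul_of_pos_right C' (by omega)
      have ht' : C' ≤ C' * j' := Nat.le_mul_of_pos_right C' (by omega)
      have e1 : a + r = a' + r' := congrArg Prod.fst h
      have e2 : C' * j - r = C' * j' - r' := congrArg Prod.snd h
      have e3 : C' * j + r' = C' * j' + r := by omega
      have e4 : r' % C' = r % C' := by
        have := congrArg (· % C') e3
        simpa [Nat.mul_add_mod] using this
      have e5 : r = r' := by
        rw [Nat.mod_eq_of_lt hr, Nat.mod_eq_of_lt hr'] at e4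
        omega
      have e6 : j = j' := by
        have : C' * j = C' * j' := by omega
        exact Nat.eq_of_mul_eq_mul_left hC'pos this
      have e7 : a = a' := by omega
      simp [e5, e6, e7]
  -- Step 3 : 2 * T.card ≤ n * n
  have h3 : T.card + T.card ≤ n * n := by
    set σ : ℕ × ℕ → ℕ × ℕ := fun p => (n + 1 - p.1, n + 1 - p.2) with hσ
    have hinj : Set.InjOn σ T := by
      intro p hp q hq h
      simp only [hT, Finset.mem_coe, Finset.mem_filter, Finset.mem_product,
        Finset.mem_Icc] at hp hq
      have e1 : n + 1 - p.1 = n + 1 - q.1 := congrArg Prod.fst h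
      have e2 : n + 1 - p.2 = n + 1 - q.2 := congrArg Prod.snd h
      exact Prod.ext (by omega) (by omega)
    have himg : (T.image σ).card = T.card := Finset.card_image_of_injOn hinj
    have hdisj : Disjoint T (T.image σ) := by
      rw [Finset.disjoint_left]
      intro p hp hp'
      simp only [hT, Finset.mem_filter, Finset.mem_product, Finset.mem_Icc] at hp
      rw [Finset.mem_image] at hp'
      obtain ⟨q, hq, hqe⟩ := hp'
      simp only [hT, Finset.mem_filter, Finset.mem_product, Finset.mem_Icc] at hq
      have e1 : n + 1 - q.1 = p.1 := congrArg Prod.fst hqe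
      have e2 : n + 1 - q.2 = p.2 := congrArg Prod.snd hqe
      omega
    calc T.card + T.card = (T ∪ T.image σ).card := by
            rw [Finset.card_union_of_disjoint hdisj, himg]
      _ ≤ ((Finset.Icc 1 n) ×ˢ (Finset.Icc 1 n)).card := by
            apply Finset.card_le_card
            intro p hp
            rcases Finset.mem_union.mp hp with h | h
            · exact Finset.mem_of_mem_filter p h
            · rw [Finset.mem_image] at h
              obtain ⟨q, hq, hqe⟩ := h
              simp only [hT, Finset.mem_filter, Finset.mem_product, Finset.mem_Icc] at hq
              simp only [Finset.mem_product, Finset.mem_Icc]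
              have e1 : n + 1 - q.1 = p.1 := congrArg Prod.fst hqe
              have e2 : n + 1 - q.2 = p.2 := congrArg Prod.snd hqe
              omega
      _ = n * n := by simp [Nat.card_Icc]
  -- combine in ℕ
  have hA : S.card * C' ≤ T.card := le_trans (Nat.mul_le_mul_right C' h1) h2
  have hnat : 2 * (S.card * C') ≤ n * n := by omega
  -- pass to ℝ
  have hkR : (0:ℝ) < (k : ℝ) - 1 := by
    have : (3:ℝ) ≤ (k : ℝ) := by exact_mod_cast hk
    linarith
  have hmR : (0:ℝ) < (m : ℝ) := by positivity
  have hC'R : (C' : ℝ) = ((k : ℝ) - 1) * m := by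
    rw [hC']
    push_cast [Nat.cast_sub (by omega : 1 ≤ k)]
    ring
  have hcast : 2 * ((S.card : ℝ) * (((k:ℝ) - 1) * m)) ≤ (n : ℝ) * n := by
    have h' : ((2 * (S.card * C') : ℕ) : ℝ) ≤ ((n * n : ℕ) : ℝ) := by exact_mod_cast hnat
    push_cast at h'
    rw [hC'R] at h'
    linarith
  rw [zero_mul, add_zero]
  have hmain : (S.card : ℝ) ≤ (n : ℝ) ^ 2 / (2 * ((k:ℝ) - 1) * m) := by
    rw [le_div_iff₀ (by positivity)]
    nlinarith [hcast]
  calc (S.card : ℝ) ≤ (n : ℝ) ^ 2 / (2 * ((k:ℝ) - 1) * m) := hmain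
    _ = (1 / (m : ℝ)) * ((n : ℝ) ^ 2 / (2 * ((k:ℝ) - 1))) := by
        rw [one_div_mul_eq_div, div_div]
end

section
/- Let m ≥ 2 and fix a coloring c of the nonzero residues of Z_m with r colors such that, for every extension of c to all of Z_m (any color on 0), there is no nontrivial monochromatic k-AP in Z_m. Define the unrolled coloring of the positive integers: for ℓ ≥ 1, write ℓ in base m and color ℓ by c applied to its least significant nonzero digit. Then the number F(n) of monochromatic k-APs in [n] satisfies F(n) = n^2/(2(m+1)(k-1)) + O(n). -/
open Finset
set_option maxHeartbeats 1000000


lemma pv_dvd_iff {m : ℕ} (hm : 2 ≤ m) {l : ℕ} (hl : 0 < l) (j : ℕ) :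
    m ^ j ∣ l ↔ j ≤ padicValNat m l := by
  have hfin : FiniteMultiplicity m l := Nat.finiteMultiplicity_iff.2 ⟨by omega, hl⟩
  rw [padicValNat_def' (by omega : m ≠ 1) (by omega)]
  exact hfin.pow_dvd_iff_le_multiplicity

lemma pv_unique {m : ℕ} (hm : 2 ≤ m) {l j : ℕ} (hl : 0 < l) (h1 : m ^ j ∣ l)
    (h2 : ¬ m ^ (j+1) ∣ l) : padicValNat m l = j := by
  have a1 := (pv_dvd_iff hm hl j).1 h1
  have a2 : ¬ (j + 1 ≤ padicValNat m l) := fun h => h2 ((pv_dvd_iff hm hl (j+1)).2 h)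
  omega

lemma pv_self_dvd {m : ℕ} (l : ℕ) : m ^ padicValNat m l ∣ l := pow_padicValNat_dvd

lemma pv_not_dvd {m : ℕ} (hm : 2 ≤ m) {l : ℕ} (hl : 0 < l) :
    ¬ m ^ (padicValNat m l + 1) ∣ l := by
  intro h
  have := (pv_dvd_iff hm hl _).1 h
  omega

/-- the color of `l` -/
noncomputable def ucol {m r : ℕ} (c : ZMod m → Fin r) (l : ℕ) : Fin r :=
  c (((l / m ^ (padicValNat m l)) % m : ℕ) : ZMod m)

lemma pv_pow_mul {m : ℕ} (hm : 2 ≤ m) (j : ℕ) {x : ℕ} (hx : 0 < x) :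
    padicValNat m (m ^ j * x) = j + padicValNat m x := by
  have hmpos : 0 < m := by omega
  apply pv_unique hm (by positivity)
  · rw [pow_add]
    exact mul_dvd_mul_left _ (pv_self_dvd x)
  · intro h
    apply pv_not_dvd hm hx
    have : m ^ j * m ^ (padicValNat m x + 1) ∣ m ^ j * x := by
      rw [← pow_add, ← add_assoc]
      exact h
    exact (mul_dvd_mul_iff_left (by positivity : (m:ℕ)^j ≠ 0)).1 this

lemma ucol_pow_mul {m r : ℕ} (hm : 2 ≤ m) (c : ZMod m → Fin r) (j : ℕ) {x : ℕ} (hx : 0 < x) :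
    ucol c (m ^ j * x) = ucol c x := by
  unfold ucol
  rw [pv_pow_mul hm j hx, pow_add, Nat.mul_div_mul_left _ _ (by positivity)]

lemma mono_iff {k r m : ℕ} (hk : 3 ≤ k) (hm : 2 ≤ m) (c : ZMod m → Fin r)
    (hc : ∀ c0 : Fin r, ∀ a d : ZMod m, d ≠ 0 →
      ¬ (∀ i < k, (fun z : ZMod m => if z = 0 then c0 else c z) (a + (i : ℕ) * d)
            = (fun z : ZMod m => if z = 0 then c0 else c z) a))
    {a d : ℕ} (ha : 0 < a) (hd : 0 < d) :
    (∀ i < k, ucol c (a + i * d) = ucol c a) ↔ m ^ (padicValNat m a + 1) ∣ d := by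
  haveI : NeZero m := ⟨by omega⟩
  constructor
  · intro hmono
    by_contra hnd
    set j := padicValNat m d with hj
    have hjd : m ^ j ∣ d := pv_self_dvd d
    have hja' : j ≤ padicValNat m a := by
      by_contra hlt
      exact hnd (dvd_trans (pow_dvd_pow m (by omega)) hjd)
    have hja : m ^ j ∣ a := (pv_dvd_iff hm ha j).2 hja'
    obtain ⟨a', ha'⟩ := hja
    obtain ⟨d', hd'⟩ := hjd
    have hmj : 0 < m ^ j := by positivity
    have ha'pos : 0 < a' := Nat.pos_of_ne_zero (by rintro rfl; simp at ha'; omega)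
    have hd'pos : 0 < d' := Nat.pos_of_ne_zero (by rintro rfl; simp at hd'; omega)
    have hmd' : ¬ m ∣ d' := by
      intro hdvd
      have h1 : m ^ (j+1) ∣ d := by
        rw [hd', pow_succ]
        exact mul_dvd_mul (dvd_refl _) hdvd
      have := (pv_dvd_iff hm hd (j+1)).1 h1
      omega
    have key : ∀ i, ucol c (a + i * d) = ucol c (a' + i * d') := by
      intro i
      have hfac : a + i * d = m ^ j * (a' + i * d') := by rw [ha', hd']; ring
      rw [hfac, ucol_pow_mul hm c j (by positivity)]
    apply hc (ucol c a) (a' : ZMod m) (d' : ZMod m)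
    · rw [Ne, ZMod.natCast_eq_zero_iff]
      exact hmd'
    have main : ∀ i' : ℕ, i' < k →
        (if ((a' + i' * d' : ℕ) : ZMod m) = 0 then ucol c a
          else c ((a' + i' * d' : ℕ) : ZMod m)) = ucol c a := by
      intro i' hi'
      by_cases h0 : ((a' + i' * d' : ℕ) : ZMod m) = 0
      · rw [if_pos h0]
      · rw [if_neg h0]
        have hnm : ¬ m ∣ (a' + i' * d') := by
          rwa [← ZMod.natCast_eq_zero_iff] at *
        have hv0 : padicValNat m (a' + i' * d') = 0 :=
          pv_unique hm (by positivity) (by simpa using one_dvd _) (by simpa using hnm)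
        have heq : ucol c (a' + i' * d') = c ((a' + i' * d' : ℕ) : ZMod m) := by
          unfold ucol
          rw [hv0, pow_zero, Nat.div_one, ZMod.natCast_mod]
        rw [← heq, ← key i', hmono i' hi']
    intro i hi
    simp only []
    rw [show ((a' : ZMod m) + (i : ℕ) * (d' : ZMod m)) = ((a' + i * d' : ℕ) : ZMod m) by
      push_cast; ring]
    rw [main i hi]
    have h0 := main 0 (by omega)
    simp only [Nat.zero_mul, Nat.add_zero] at h0
    exact h0.symm
  · intro hdvd i hi
    set t := padicValNat m a with ht
    have hMa : m ^ t ∣ a := pv_self_dvd a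
    have hMd' : m ^ (t+1) ∣ i * d := Dvd.dvd.mul_left hdvd i
    have hMd : m ^ t ∣ i * d := dvd_trans (pow_dvd_pow m (Nat.le_succ t)) hMd'
    have hna : ¬ m ^ (t+1) ∣ a := pv_not_dvd hm ha
    have hv : padicValNat m (a + i * d) = t := by
      apply pv_unique hm (by omega)
      · exact dvd_add hMa hMd
      · intro h
        apply hna
        have h' : m ^ (t + 1) ∣ i * d + a := by
          rwa [Nat.add_comm a (i * d)] at h
        exact (Nat.dvd_add_right hMd').1 h'
    unfold ucol
    rw [hv, ← ht]
    obtain ⟨q, hq⟩ : m ^ t * m ∣ i * d := by rw [← pow_succ]; exact hMd'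
    have hdiv : (a + i * d) / m ^ t = a / m ^ t + (i * d) / m ^ t :=
      Nat.add_div_of_dvd_right hMa
    have hdiv2 : (i * d) / m ^ t = m * q := by
      rw [hq, mul_assoc, Nat.mul_div_cancel_left _ (by positivity)]
    rw [hdiv, hdiv2, Nat.add_mul_mod_self_left]


lemma floor_div_close (N D : ℕ) (hD : 0 < D) : |((N / D : ℕ) : ℝ) - (N : ℝ) / D| ≤ 1 := by
  have h1 := Nat.div_add_mod N D
  have h2 : N % D < D := Nat.mod_lt _ hD
  have hDR : (0:ℝ) < D := by exact_mod_cast hD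
  have hN : (N:ℝ) = D * (N / D : ℕ) + (N % D : ℕ) := by exact_mod_cast h1.symm
  have key : (N:ℝ)/D = (N / D : ℕ) + (N % D : ℕ)/D := by
    rw [hN]; field_simp
  rw [key]
  have h0 : (0:ℝ) ≤ (N % D : ℕ) := by positivity
  have h3 : ((N % D : ℕ):ℝ) < D := by exact_mod_cast h2
  have h4 : ((N % D : ℕ):ℝ)/D < 1 := by rwa [div_lt_one hDR]
  have h5 : (0:ℝ) ≤ ((N % D : ℕ):ℝ)/D := by positivity
  rw [abs_le]
  constructor <;> nlinarith

lemma gauss_real (B : ℕ) : ∑ b ∈ Icc 1 B, (b:ℝ) = B * (B+1) / 2 := by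
  induction B with
  | zero => simp
  | succ B ih =>
    rw [Finset.sum_Icc_succ_top (by omega)]
    rw [ih]
    push_cast
    ring

lemma Uj_est (n D : ℕ) (hD : 0 < D) :
    |(∑ a ∈ Icc 1 n, if D ∣ a then ((n:ℝ) - a) else 0) - (n:ℝ)^2/(2*D)| ≤ (n:ℝ) + D := by
  have hDR : (0:ℝ) < D := by exact_mod_cast hD
  set B := n / D with hB
  have himg : (Icc 1 n).filter (fun a => D ∣ a) = (Icc 1 B).image (fun b => D * b) := by
    ext a
    simp only [mem_filter, mem_Icc, mem_image]
    constructor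
    · rintro ⟨⟨h1, h2⟩, b, rfl⟩
      refine ⟨b, ⟨?_, ?_⟩, rfl⟩
      · rcases Nat.eq_zero_or_pos b with rfl | h
        · simp at h1
        · exact h
      · rw [hB, Nat.le_div_iff_mul_le hD, mul_comm]; exact h2
    · rintro ⟨b, ⟨hb1, hb2⟩, rfl⟩
      rw [hB, Nat.le_div_iff_mul_le hD] at hb2
      exact ⟨⟨Nat.mul_pos hD hb1, by rw [mul_comm]; exact hb2⟩, ⟨b, rfl⟩⟩
  have hrw : (∑ a ∈ Icc 1 n, if D ∣ a then ((n:ℝ) - a) else 0)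
      = ∑ b ∈ Icc 1 B, ((n:ℝ) - (D * b : ℕ)) := by
    rw [← Finset.sum_filter, himg,
      Finset.sum_image (fun x _ y _ h => Nat.eq_of_mul_eq_mul_left hD h)]
  rw [hrw]
  have hsum : ∑ b ∈ Icc 1 B, ((n:ℝ) - (D * b : ℕ)) = B * n - D * (B*(B+1)/2) := by
    rw [Finset.sum_sub_distrib, Finset.sum_const, Nat.card_Icc]
    push_cast
    rw [← Finset.mul_sum, gauss_real]
    push_cast
    ring
  rw [hsum]
  have hdm := Nat.div_add_mod n D
  have hmod : n % D < D := Nat.mod_lt _ hD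
  have hDB : (D:ℝ) * B ≤ n := by
    have : D * B ≤ n := by rw [hB, mul_comm]; exact Nat.div_mul_le_self n D
    exact_mod_cast this
  have hnD : (n:ℝ) < D * B + D := by
    have : n < D * B + D := by
      calc n = D * B + n % D := by rw [hB]; omega
      _ < D * B + D := Nat.add_lt_add_left hmod _
    exact_mod_cast this
  have hρ0 : (0:ℝ) ≤ (n:ℝ) - D*B := by linarith
  have hρD : (n:ℝ) - D*B < D := by linarith
  have e1 : (B:ℝ) * n - D * (B*(B+1)/2) - (n:ℝ)^2/(2*D)
      = -(((D:ℝ)^2*B + ((n:ℝ) - D*B)^2)/(2*D)) := by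
    field_simp
    ring
  rw [e1, abs_neg, abs_div, abs_of_nonneg (by positivity), abs_of_nonneg (by positivity)]
  rw [div_le_iff₀ (by positivity)]
  have hB0 : (0:ℝ) ≤ (B:ℕ) := by positivity
  nlinarith [mul_le_mul_of_nonneg_left hDB (le_of_lt hDR),
    mul_self_nonneg ((n:ℝ) - D*B), hρ0, hρD, hDR,
    mul_le_mul_of_nonneg_left (le_of_lt hρD) (le_of_lt hDR)]



lemma pow_id {m : ℕ} (hm : 2 ≤ m) {a n : ℕ} (ha : 1 ≤ a) (han : a ≤ n) :
    ((m:ℝ)⁻¹) ^ (padicValNat m a + 1)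
      = 1 - (1 - (m:ℝ)⁻¹) * ∑ j ∈ range (n+1),
          (if m ^ j ∣ a then ((m:ℝ)⁻¹)^j else 0) := by
  have hm0 : (0:ℝ) < m := by exact_mod_cast (by omega : 0 < m)
  set x : ℝ := (m:ℝ)⁻¹ with hxdef
  have hx1 : x ≠ 1 := by
    rw [hxdef]
    intro h
    have : (m:ℝ) = 1 := by field_simp at h; linarith [h]
    have : m = 1 := by exact_mod_cast this
    omega
  have hva : padicValNat m a ≤ n := by
    have h1 : m ^ padicValNat m a ∣ a := pow_padicValNat_dvd
    have h2 : m ^ padicValNat m a ≤ a := Nat.le_of_dvd (by omega) h1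
    have h3 : padicValNat m a < m ^ padicValNat m a :=
      Nat.lt_pow_self (by omega)
    omega
  have hsub : ∑ j ∈ range (padicValNat m a + 1), (if m ^ j ∣ a then x^j else 0)
      = ∑ j ∈ range (n+1), (if m ^ j ∣ a then x^j else 0) := by
    apply Finset.sum_subset (Finset.range_subset_range.2 (by omega))
    intro j hj hj2
    rw [if_neg]
    intro hdvd
    have := (pv_dvd_iff hm (by omega) j).1 hdvd
    simp only [Finset.mem_range] at hj hj2
    omega
  have hcongr : ∑ j ∈ range (padicValNat m a + 1), (if m ^ j ∣ a then x^j else 0)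
      = ∑ j ∈ range (padicValNat m a + 1), x^j := by
    apply Finset.sum_congr rfl
    intro j hj
    simp only [Finset.mem_range] at hj
    rw [if_pos ((pv_dvd_iff hm (by omega) j).2 (by omega))]
  rw [← hsub, hcongr, geom_sum_eq hx1]
  have hx1' : x - 1 ≠ 0 := fun h => hx1 (by linarith [sub_eq_zero.1 h])
  field_simp
  ring





lemma final_est {k m : ℕ} (hk : 3 ≤ k) (hm : 2 ≤ m) {n : ℕ} (hn : 1 ≤ n) :
    |((∑ a ∈ Icc 1 n, (n - a) / ((k - 1) * m ^ (padicValNat m a + 1)) : ℕ) : ℝ)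
      - (n:ℝ)^2 / (2*((m:ℝ)+1)*((k:ℝ)-1))| ≤ 9 * (n:ℝ) := by
  have hm0 : (0:ℝ) < m := by exact_mod_cast (by omega : 0 < m)
  have hm1 : (2:ℝ) ≤ m := by exact_mod_cast hm
  have hkR : (3:ℝ) ≤ k := by exact_mod_cast hk
  have hK0 : (0:ℝ) < (k:ℝ) - 1 := by linarith
  have hK1 : (1:ℝ) ≤ (k:ℝ) - 1 := by linarith
  have hx0' : (0:ℝ) < (m:ℝ)⁻¹ := by positivity
  have hxhalf' : (m:ℝ)⁻¹ ≤ 1/2 := by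
    rw [inv_le_comm₀ (by linarith) (by norm_num)]
    simpa using hm1
  set x : ℝ := (m:ℝ)⁻¹ with hxdef
  have hx0 : (0:ℝ) < x := hx0'
  have hxhalf : x ≤ 1/2 := hxhalf'
  have hnR : (1:ℝ) ≤ n := by exact_mod_cast hn
  set v : ℕ → ℕ := padicValNat m with hv
  set Q : ℝ := (n:ℝ)^2/2 with hQ
  set W : ℕ → ℝ := fun j => ∑ a ∈ Icc 1 n, (if m^j ∣ a then ((n:ℝ) - a) else 0) with hW
  set G : ℝ := ∑ j ∈ range (n+1), x^j * W j with hG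
  set R : ℝ := ∑ a ∈ Icc 1 n, ((n:ℝ) - a) * x ^ (v a + 1) / ((k:ℝ)-1) with hR
  -- Step A : floor approximation
  have hSR : |((∑ a ∈ Icc 1 n, (n - a) / ((k - 1) * m ^ (v a + 1)) : ℕ) : ℝ) - R| ≤ (n:ℝ) := by
    rw [Nat.cast_sum, hR, ← Finset.sum_sub_distrib]
    refine le_trans (Finset.abs_sum_le_sum_abs _ _) ?_
    have hone : (∑ _a ∈ Icc 1 n, (1:ℝ)) = n := by simp
    refine le_trans (Finset.sum_le_sum (fun a ha => ?_)) (le_of_eq hone)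
    rw [mem_Icc] at ha
    have hD : 0 < (k-1) * m ^ (v a + 1) :=
      Nat.mul_pos (by omega) (Nat.pow_pos (by omega))
    have hfd := floor_div_close (n - a) ((k-1) * m ^ (v a + 1)) hD
    have hcast : ((n - a : ℕ):ℝ) = (n:ℝ) - a := by
      have := ha.2; push_cast [this]; ring
    have hterm : ((n - a : ℕ):ℝ) / (((k-1) * m ^ (v a + 1) : ℕ):ℝ)
        = ((n:ℝ) - a) * x ^ (v a + 1) / ((k:ℝ)-1) := by
      rw [hcast]
      have hDcast : (((k-1) * m ^ (v a + 1) : ℕ):ℝ) = ((k:ℝ)-1) * (m:ℝ)^(v a + 1) := by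
        push_cast [Nat.cast_sub (by omega : 1 ≤ k)]
        ring
      rw [hDcast, hxdef, inv_pow]
      rw [div_eq_div_iff (by positivity) (by positivity)]
      field_simp
    rw [hterm] at hfd
    exact hfd
  -- Step B : rewrite R
  have hRform : R = (W 0 - (1-x) * G)/((k:ℝ)-1) := by
    rw [hR, ← Finset.sum_div]
    congr 1
    have hterm : ∀ a ∈ Icc 1 n, ((n:ℝ)-a) * x^(v a + 1)
        = ((n:ℝ)-a) - (1-x) * ∑ j ∈ range (n+1),
            (if m^j ∣ a then ((n:ℝ)-a)*x^j else 0) := by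
      intro a ha
      rw [mem_Icc] at ha
      have hpid := pow_id hm ha.1 ha.2
      rw [← hxdef] at hpid
      rw [hv, hpid]
      have h2 : ((n:ℝ)-a) * ∑ j ∈ range (n+1), (if m^j ∣ a then x^j else 0)
          = ∑ j ∈ range (n+1), (if m^j ∣ a then ((n:ℝ)-a)*x^j else 0) := by
        rw [Finset.mul_sum]
        exact Finset.sum_congr rfl (fun j _ => by rw [mul_ite, mul_zero])
      rw [← h2]
      ring
    rw [Finset.sum_congr rfl hterm, Finset.sum_sub_distrib, ← Finset.mul_sum]
    congr 1
    · rw [hW]; simp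
    rw [Finset.sum_comm]
    congr 1
    rw [hG]
    apply Finset.sum_congr rfl
    intro j _
    rw [hW]
    simp only [Finset.mul_sum]
    apply Finset.sum_congr rfl
    intro a _
    rw [mul_ite, mul_zero]
    congr 1
    ring
  -- estimates
  have hWj : ∀ j : ℕ, |W j - (n:ℝ)^2/(2*(m:ℝ)^j)| ≤ (n:ℝ) + (m:ℝ)^j := by
    intro j
    have h := Uj_est n (m^j) (Nat.pow_pos (by omega))
    push_cast at h
    exact h
  have hx1 : x < 1 := by linarith
  have hxne1 : x ≠ 1 := by linarith
  have hgeo : ∑ j ∈ range (n+1), x^j ≤ 2 := by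
    rw [geom_sum_eq hxne1]
    have h1x : (0:ℝ) < 1 - x := by linarith
    have heq : (x^(n+1) - 1)/(x-1) = (1 - x^(n+1))/(1-x) := by
      rw [div_eq_div_iff (by linarith) (by linarith)]
      ring
    rw [heq, div_le_iff₀ h1x]
    nlinarith [pow_nonneg (le_of_lt hx0) (n+1)]
  have hx2ne1 : x^2 ≠ 1 := by nlinarith
  have h1x2 : (0:ℝ) < 1 - x^2 := by nlinarith
  have h1x2' : (3:ℝ)/4 ≤ 1 - x^2 := by nlinarith
  have hG1 : |G - Q * ∑ j ∈ range (n+1), (x^2)^j| ≤ 4 * (n:ℝ) := by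
    rw [hG, Finset.mul_sum, ← Finset.sum_sub_distrib]
    refine le_trans (Finset.abs_sum_le_sum_abs _ _) ?_
    have hterm : ∀ j ∈ range (n+1),
        |x^j * W j - Q * (x^2)^j| ≤ x^j * ((n:ℝ) + (m:ℝ)^j) := by
      intro j _
      have hkey : Q * (x^2)^j = x^j * ((n:ℝ)^2/(2*(m:ℝ)^j)) := by
        rw [hQ, hxdef]
        have hmp : ((m:ℝ)^j) ≠ 0 := by positivity
        rw [← pow_mul, mul_comm 2 j, pow_mul, inv_pow, inv_pow]
        field_simp
      rw [hkey, ← mul_sub, abs_mul, abs_of_nonneg (by positivity)]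
      exact mul_le_mul_of_nonneg_left (hWj j) (by positivity)
    refine le_trans (Finset.sum_le_sum hterm) ?_
    have hsplit : ∑ j ∈ range (n+1), x^j * ((n:ℝ) + (m:ℝ)^j)
        = (n:ℝ) * (∑ j ∈ range (n+1), x^j) + ((n:ℝ)+1) := by
      have hc : ∀ j ∈ range (n+1), x^j * ((n:ℝ) + (m:ℝ)^j) = (n:ℝ) * x^j + x^j * (m:ℝ)^j :=
        fun j _ => by ring
      rw [Finset.sum_congr rfl hc, Finset.sum_add_distrib, ← Finset.mul_sum]
      congr 1
      have hone : ∀ j ∈ range (n+1), x^j * (m:ℝ)^j = 1 := by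
        intro j _
        rw [hxdef, inv_pow]
        field_simp
      rw [Finset.sum_congr rfl hone]
      simp
    rw [hsplit]
    linarith [mul_le_mul_of_nonneg_left hgeo (by positivity : (0:ℝ) ≤ (n:ℝ)), hnR]
  have hG2 : |Q * ∑ j ∈ range (n+1), (x^2)^j - Q * (1/(1-x^2))| ≤ (n:ℝ) := by
    have heq : ∑ j ∈ range (n+1), (x^2)^j = (1 - (x^2)^(n+1))/(1-x^2) := by
      rw [geom_sum_eq hx2ne1, div_eq_div_iff (by linarith) (by linarith)]
      ring
    rw [heq]
    have hdiff : Q * ((1 - (x^2)^(n+1))/(1-x^2)) - Q * (1/(1-x^2))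
        = -(Q * (x^2)^(n+1)/(1-x^2)) := by
      field_simp
      ring
    rw [hdiff, abs_neg, abs_of_nonneg (by positivity)]
    have hxx : x^2 ≤ 1/4 := by nlinarith
    have hp1 : (x^2)^(n+1) ≤ (1/4:ℝ)^(n+1) :=
      pow_le_pow_left₀ (by positivity) hxx (n+1)
    have hn2 : (n:ℝ) < 2^n := by exact_mod_cast Nat.lt_two_pow_self
    have h4n : (n:ℝ)^2 ≤ 4^n := by
      have h24 : ((2:ℝ)^n)^2 = 4^n := by
        rw [← pow_mul, mul_comm, pow_mul]
        norm_num
      nlinarith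
    have hb3 : (n:ℝ)^2 * (1/4:ℝ)^n ≤ 1 := by
      calc (n:ℝ)^2 * (1/4:ℝ)^n ≤ 4^n * (1/4:ℝ)^n :=
            mul_le_mul_of_nonneg_right h4n (by positivity)
        _ = 1 := by rw [← mul_pow]; norm_num
    calc Q * (x^2)^(n+1)/(1-x^2) ≤ Q * ((1/4:ℝ)^(n+1))/(3/4) := by
          gcongr
      _ = (n:ℝ)^2 * (1/4:ℝ)^n / 6 := by rw [hQ]; ring
      _ ≤ 1/6 := by linarith
      _ ≤ (n:ℝ) := by linarith
  have hW0 : |W 0 - Q| ≤ 2*(n:ℝ) := by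
    have h := hWj 0
    simp only [pow_zero, mul_one] at h
    calc |W 0 - Q| ≤ (n:ℝ) + 1 := by rw [hQ]; exact h
      _ ≤ 2*(n:ℝ) := by linarith
  have hxval : 1 - (1-x)*(1/(1-x^2)) = 1/((m:ℝ)+1) := by
    have h1x : (1:ℝ) - x ≠ 0 := by linarith
    have h1px : (1:ℝ) + x ≠ 0 := by linarith
    have e : 1 - x^2 = (1-x)*(1+x) := by ring
    rw [e, show (1-x)*(1/((1-x)*(1+x))) = 1/(1+x) by field_simp]
    rw [hxdef]
    have hm0' : (m:ℝ) ≠ 0 := by linarith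
    have hm1' : (1:ℝ) + (m:ℝ)⁻¹ ≠ 0 := by positivity
    have hm2' : (m:ℝ) + 1 ≠ 0 := by linarith
    field_simp
    ring
  have htarget : (Q - (1-x)*(Q*(1/(1-x^2))))/((k:ℝ)-1)
      = (n:ℝ)^2/(2*((m:ℝ)+1)*((k:ℝ)-1)) := by
    have e : Q - (1-x)*(Q*(1/(1-x^2))) = Q * (1 - (1-x)*(1/(1-x^2))) := by ring
    rw [e, hxval, hQ]
    have h2 : (m:ℝ) + 1 ≠ 0 := by linarith
    have h3 : (k:ℝ) - 1 ≠ 0 := by linarith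
    field_simp
  have hRT : |R - (n:ℝ)^2/(2*((m:ℝ)+1)*((k:ℝ)-1))| ≤ 8*(n:ℝ) := by
    have e0 : R - (n:ℝ)^2/(2*((m:ℝ)+1)*((k:ℝ)-1))
        = ((W 0 - (1-x)*G) - (Q - (1-x)*(Q*(1/(1-x^2)))))/((k:ℝ)-1) := by
      rw [hRform, ← htarget]
      ring
    rw [e0]
    have hGQ : |G - Q*(1/(1-x^2))| ≤ 5*(n:ℝ) := by
      have e2 : G - Q*(1/(1-x^2)) = (G - Q * ∑ j ∈ range (n+1), (x^2)^j)
          + (Q * ∑ j ∈ range (n+1), (x^2)^j - Q*(1/(1-x^2))) := by ring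
      rw [e2]
      refine le_trans (abs_add_le _ _) ?_
      linarith [hG1, hG2]
    have hnum : |(W 0 - (1-x)*G) - (Q - (1-x)*(Q*(1/(1-x^2))))| ≤ 8*(n:ℝ) := by
      have e1 : (W 0 - (1-x)*G) - (Q - (1-x)*(Q*(1/(1-x^2))))
          = (W 0 - Q) + (-((1-x)*(G - Q*(1/(1-x^2))))) := by ring
      rw [e1]
      refine le_trans (abs_add_le _ _) ?_
      rw [abs_neg, abs_mul]
      have h1mx : |1 - x| ≤ 1 := by
        rw [abs_of_nonneg (by linarith)]; linarith
      have := mul_le_mul h1mx hGQ (abs_nonneg _) (by norm_num)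
      linarith
    rw [abs_div, abs_of_pos hK0]
    exact le_trans (div_le_self (abs_nonneg _) hK1) hnum
  have efinal : ((∑ a ∈ Icc 1 n, (n - a) / ((k - 1) * m ^ (v a + 1)) : ℕ) : ℝ)
      - (n:ℝ)^2 / (2*((m:ℝ)+1)*((k:ℝ)-1))
      = (((∑ a ∈ Icc 1 n, (n - a) / ((k - 1) * m ^ (v a + 1)) : ℕ) : ℝ) - R)
        + (R - (n:ℝ)^2/(2*((m:ℝ)+1)*((k:ℝ)-1))) := by ring
  rw [efinal]
  refine le_trans (abs_add_le _ _) ?_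
  linarith [hSR, hRT]
lemma card_eq {k r m : ℕ} (hk : 3 ≤ k) (hm : 2 ≤ m) (c : ZMod m → Fin r)
    (hc : ∀ c0 : Fin r, ∀ a d : ZMod m, d ≠ 0 →
      ¬ (∀ i < k, (fun z : ZMod m => if z = 0 then c0 else c z) (a + (i : ℕ) * d)
            = (fun z : ZMod m => if z = 0 then c0 else c z) a))
    (n : ℕ) :
    (((Finset.Icc 1 n) ×ˢ (Finset.Icc 1 n)).filter
        (fun p : ℕ × ℕ => p.1 + (k - 1) * p.2 ≤ n ∧
          ∀ i < k, ucol c (p.1 + i * p.2) = ucol c p.1)).card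
      = ∑ a ∈ Icc 1 n, (n - a) / ((k - 1) * m ^ (padicValNat m a + 1)) := by
  classical
  rw [Finset.card_filter, Finset.sum_product]
  apply Finset.sum_congr rfl
  intro a haIcc
  rw [mem_Icc] at haIcc
  rw [← Finset.card_filter]
  have hset : (Icc 1 n).filter (fun d => a + (k - 1) * d ≤ n ∧
        ∀ i < k, ucol c (a + i * d) = ucol c a)
      = (Ioc 0 ((n - a) / (k - 1))).filter
          (fun d => m ^ (padicValNat m a + 1) ∣ d) := by
    ext d
    simp only [mem_filter, mem_Icc, mem_Ioc]
    constructor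
    · rintro ⟨⟨hd1, hd2⟩, hle, hmono⟩
      have hdvd := (mono_iff hk hm c hc (by omega) (by omega)).1 hmono
      refine ⟨⟨by omega, ?_⟩, hdvd⟩
      rw [Nat.le_div_iff_mul_le (by omega : 0 < k - 1)]
      rw [mul_comm]
      omega
    · rintro ⟨⟨hd1, hd2⟩, hdvd⟩
      rw [Nat.le_div_iff_mul_le (by omega : 0 < k - 1)] at hd2
      have hd2' : (k-1) * d ≤ n - a := by
        rw [mul_comm]; exact hd2
      have hdn : d ≤ d * (k - 1) := Nat.le_mul_of_pos_right d (by omega)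
      refine ⟨⟨by omega, by omega⟩, by omega,
        (mono_iff hk hm c hc (by omega) (by omega)).2 hdvd⟩
  rw [hset, Nat.Ioc_filter_dvd_card_eq_div, Nat.div_div_eq_div_mul]

/-- Unrolling: let c color the nonzero residues of Z_m with r colors so that however 0
is colored, Z_m has no nontrivial monochromatic k-AP.  Color ℓ ≥ 1 by c applied to the
least significant nonzero base-m digit of ℓ.  Then the number F(n) of monochromatic
k-APs in [n] is n²/(2(m+1)(k-1)) + O(n). -/
theorem stmt_13 (k r m : ℕ) (hk : 3 ≤ k) (hr : 2 ≤ r) (hm : 2 ≤ m)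
    (c : ZMod m → Fin r)
    (hc : ∀ c0 : Fin r, ∀ a d : ZMod m, d ≠ 0 →
      ¬ (∀ i < k, (fun z : ZMod m => if z = 0 then c0 else c z) (a + (i : ℕ) * d)
            = (fun z : ZMod m => if z = 0 then c0 else c z) a)) :
    ∃ C : ℝ, ∀ n : ℕ,
      |((((Finset.Icc 1 n) ×ˢ (Finset.Icc 1 n)).filter
          (fun p : ℕ × ℕ => p.1 + (k - 1) * p.2 ≤ n ∧
            ∀ i < k,
              c ((((p.1 + i * p.2) / m ^ (padicValNat m (p.1 + i * p.2))) % m : ℕ) : ZMod m)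
                = c (((p.1 / m ^ (padicValNat m p.1)) % m : ℕ) : ZMod m))).card : ℝ)
        - (n : ℝ) ^ 2 / (2 * (m + 1) * (k - 1))| ≤ C * n := by
  classical
  refine ⟨9, fun n => ?_⟩
  have hcard := card_eq hk hm c hc n
  simp only [ucol] at hcard
  erw [hcard]
  rcases Nat.eq_zero_or_pos n with rfl | hn
  · simp
  · exact final_est hk hm hn
end

section
/- In Z_13, let S ∪ {0} where S = {1,3,4,9,10,12} is the set of nonzero quadratic residues mod 13. For the pattern a, a+2d, a+3d, a+5d: if all four terms lie in S ∪ {0} then d ≡ 0 (mod 13); and the same holds for the non-residues {2,5,6,7,8,11} ∪ {0}. -/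
/-- In Z_13, if a, a+2d, a+3d, a+5d all lie in S ∪ {0} where S = {1,3,4,9,10,12} is
the set of nonzero quadratic residues, then d = 0; likewise for the non-residues
{2,5,6,7,8,11} ∪ {0}. -/
theorem stmt_18 :
    (∀ a d : ZMod 13,
      a ∈ ({1, 3, 4, 9, 10, 12, 0} : Set (ZMod 13)) →
      a + 2 * d ∈ ({1, 3, 4, 9, 10, 12, 0} : Set (ZMod 13)) →
      a + 3 * d ∈ ({1, 3, 4, 9, 10, 12, 0} : Set (ZMod 13)) →
      a + 5 * d ∈ ({1, 3, 4, 9, 10, 12, 0} : Set (ZMod 13)) → d = 0)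
    ∧ (∀ a d : ZMod 13,
      a ∈ ({2, 5, 6, 7, 8, 11, 0} : Set (ZMod 13)) →
      a + 2 * d ∈ ({2, 5, 6, 7, 8, 11, 0} : Set (ZMod 13)) →
      a + 3 * d ∈ ({2, 5, 6, 7, 8, 11, 0} : Set (ZMod 13)) →
      a + 5 * d ∈ ({2, 5, 6, 7, 8, 11, 0} : Set (ZMod 13)) → d = 0) := by
  simp only [Set.mem_insert_iff, Set.mem_singleton_iff]
  constructor <;> decide
end
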